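/- Let A be a normal complex n×n matrix of rank r with nonzero eigenvalues λ_1, …, λ_r, and let B be an invertible normal complex n×n matrix with eigenvalues λ̂_1, …, λ̂_n. Set F̂ = Σ_{j=1}^r |λ_j|² + Σ_{j=1}^n |λ̂_j|². Then ‖ |A| − |B| ‖_F ≤ sqrt( max_σ (F̂ − 2 Σ_{j=1}^r |λ̂_{σ(j)}| |λ_j|) / (F̂ − 2 Σ_{j=1}^r Re(λ̂_{σ(j)} · conj(λ_j))) ) · ‖A − B‖_F, where the maximum is taken over all injective maps σ from {1, …, r} into {1, …, n}. -/

import Mathlib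

open scoped BigOperators Matrix ComplexOrder

noncomputable def frob {m n : ℕ} (A : Matrix (Fin m) (Fin n) ℂ) : ℝ :=
  Real.sqrt (∑ i, ∑ j, ‖A i j‖ ^ 2)

noncomputable def absMat {m n : ℕ} (A : Matrix (Fin m) (Fin n) ℂ) :
    Matrix (Fin n) (Fin n) ℂ :=
  (Matrix.isHermitian_conjTranspose_mul_self A).eigenvectorUnitary.1 *
    Matrix.diagonal (((↑) : ℝ → ℂ) ∘ (fun x => Real.sqrt x) ∘
      (Matrix.isHermitian_conjTranspose_mul_self A).eigenvalues) *
    (star (Matrix.isHermitian_conjTranspose_mul_self A).eigenvectorUnitary : Matrix (Fin n) (Fin n) ℂ)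

noncomputable def svdMat (m n r : ℕ) (σ : ℕ → ℝ) : Matrix (Fin m) (Fin n) ℂ :=
  Matrix.of fun i j =>
    if (i : ℕ) = (j : ℕ) ∧ (i : ℕ) < r then ((σ ((i : ℕ) + 1) : ℝ) : ℂ) else 0

/-- `A` admits a singular value decomposition with singular values
`σ 1, …, σ r` (indexed from 1) on the diagonal. -/
def HasSVD {m n : ℕ} (A : Matrix (Fin m) (Fin n) ℂ) (r : ℕ) (σ : ℕ → ℝ) : Prop :=
  ∃ (U : Matrix (Fin m) (Fin m) ℂ) (V : Matrix (Fin n) (Fin n) ℂ),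
    Uᴴ * U = 1 ∧ U * Uᴴ = 1 ∧ Vᴴ * V = 1 ∧ V * Vᴴ = 1 ∧
    A = U * svdMat m n r σ * Vᴴ

/-- `σ 1 ≥ σ 2 ≥ … ≥ σ r > 0`. -/
def SingVals (r : ℕ) (σ : ℕ → ℝ) : Prop :=
  (∀ j, 1 ≤ j → j ≤ r → 0 < σ j) ∧ ∀ j, 1 ≤ j → j < r → σ (j + 1) ≤ σ j

/-- Generalized polar decomposition: `A = Q * |A|`, where `Q` is a rank-`r` partial
isometry such that the column space of `Qᴴ` equals the column space of `|A|`. -/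
def IsPolar {m n : ℕ} (A Q : Matrix (Fin m) (Fin n) ℂ) (r : ℕ) : Prop :=
  A = Q * absMat A ∧ Q * Qᴴ * Q = Q ∧ Q.rank = r ∧
    LinearMap.range (Matrix.mulVecLin Qᴴ) =
      LinearMap.range (Matrix.mulVecLin (absMat A))

/-- `A` is unitarily diagonalizable with eigenvalues `l 1, …, l r` (indexed from 1)
followed by zeros on the diagonal. -/
def HasEigen {n : ℕ} (A : Matrix (Fin n) (Fin n) ℂ) (r : ℕ) (l : ℕ → ℂ) : Prop :=
  ∃ U : Matrix (Fin n) (Fin n) ℂ, Uᴴ * U = 1 ∧ U * Uᴴ = 1 ∧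
    A = U * Matrix.diagonal (fun i : Fin n =>
      if (i : ℕ) < r then l ((i : ℕ) + 1) else 0) * Uᴴ

/-!
Write `A = U diag(d) Uᴴ` and `B = V diag(e) Vᴴ` with `U, V` unitary, so that
`|A| = U diag(|d|) Uᴴ` and `|B| = V diag(|e|) Vᴴ`. With the unitary `W = Uᴴ V`,
`U D Uᴴ - V E Vᴴ = U (D W - W E) Vᴴ`, hence
`‖A - B‖_F² = ∑ⱼ ∑ᵢ |dⱼ - eᵢ|² |Wⱼᵢ|²` and `‖|A| - |B|‖_F² = ∑ⱼ ∑ᵢ (|dⱼ| - |eᵢ|)² |Wⱼᵢ|²`.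
The matrix `(|Wⱼᵢ|²)` is doubly stochastic and the inequality is linear in it, so by Birkhoff's
theorem it suffices to check it at permutation matrices. For a permutation `σ`, since `dⱼ = 0` for
`j ≥ r`, the two sums are the numerator and denominator of the quotient indexed by the injection
`σ` restricted to `{0, …, r - 1}`, which is at most the supremum.
-/

open Matrix Finset

namespace Matrix

variable {m n 𝕜 : Type*} [Fintype m] [Fintype n] [RCLike 𝕜]

theorem sum_norm_sq_eq_re_trace (X : Matrix m n 𝕜) :
    ∑ i, ∑ j, ‖X i j‖ ^ 2 = RCLike.re (Xᴴ * X).trace := by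
  simp only [trace, diag, mul_apply, conjTranspose_apply, map_sum, RCLike.star_def,
    RCLike.conj_mul]
  rw [Finset.sum_comm]
  norm_cast

variable [DecidableEq m] [DecidableEq n]

theorem sum_norm_sq_unitary_mul_mul {U : Matrix m m 𝕜} {V : Matrix n n 𝕜}
    (hU : U ∈ unitaryGroup m 𝕜) (hV : V ∈ unitaryGroup n 𝕜) (X : Matrix m n 𝕜) :
    ∑ i, ∑ j, ‖(U * X * V) i j‖ ^ 2 = ∑ i, ∑ j, ‖X i j‖ ^ 2 := by
  have hUU : Uᴴ * U = 1 := Unitary.star_mul_self_of_mem hU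
  have hVV : V * Vᴴ = 1 := Unitary.mul_star_self_of_mem hV
  have hconj : (U * X * V)ᴴ * (U * X * V) = Vᴴ * (Xᴴ * X) * V := by
    simp only [conjTranspose_mul, Matrix.mul_assoc, ← Matrix.mul_assoc Uᴴ U, hUU, Matrix.one_mul]
  rw [sum_norm_sq_eq_re_trace, sum_norm_sq_eq_re_trace, hconj, trace_mul_comm, ← Matrix.mul_assoc,
    hVV, Matrix.one_mul]

theorem unitary_conj_diagonal_sub_eq {U V : Matrix n n 𝕜}
    (hU : U ∈ unitaryGroup n 𝕜) (hV : V ∈ unitaryGroup n 𝕜) (d e : n → 𝕜) :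
    U * diagonal d * Uᴴ - V * diagonal e * Vᴴ =
      U * of (fun j i => (d j - e i) * (Uᴴ * V) j i) * Vᴴ := by
  have hUU : U * Uᴴ = 1 := Unitary.mul_star_self_of_mem hU
  have hVV : V * Vᴴ = 1 := Unitary.mul_star_self_of_mem hV
  have hcomm : of (fun j i => (d j - e i) * (Uᴴ * V) j i) =
      diagonal d * (Uᴴ * V) - Uᴴ * V * diagonal e := by
    ext j i
    simp [diagonal_mul, mul_diagonal, sub_mul, mul_comm]
  rw [hcomm, Matrix.mul_sub, Matrix.sub_mul]
  simp only [← Matrix.mul_assoc, hUU, Matrix.one_mul]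
  simp only [Matrix.mul_assoc, hVV, Matrix.mul_one]

theorem sum_norm_sq_unitary_conj_diagonal_sub {U V : Matrix n n 𝕜}
    (hU : U ∈ unitaryGroup n 𝕜) (hV : V ∈ unitaryGroup n 𝕜) (d e : n → 𝕜) :
    ∑ i, ∑ j, ‖(U * diagonal d * Uᴴ - V * diagonal e * Vᴴ) i j‖ ^ 2 =
      ∑ j, ∑ i, ‖d j - e i‖ ^ 2 * ‖(Uᴴ * V) j i‖ ^ 2 := by
  have hV' : Vᴴ ∈ unitaryGroup n 𝕜 := Unitary.star_mem hV
  rw [unitary_conj_diagonal_sub_eq hU hV, sum_norm_sq_unitary_mul_mul hU hV']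
  simp only [of_apply, norm_mul, mul_pow]

theorem of_norm_sq_mem_doublyStochastic {W : Matrix n n 𝕜} (hW : W ∈ unitaryGroup n 𝕜) :
    of (fun i j => ‖W i j‖ ^ 2) ∈ doublyStochastic ℝ n := by
  have row (i : n) : ∑ j, ‖W i j‖ ^ 2 = 1 := by
    have := congr_arg (fun M => RCLike.re (M i i)) (Unitary.mul_star_self_of_mem hW)
    simp only [mul_apply, star_apply, RCLike.star_def, RCLike.mul_conj, one_apply_eq, map_sum,
      RCLike.one_re] at this
    exact_mod_cast this
  have col (j : n) : ∑ i, ‖W i j‖ ^ 2 = 1 := by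
    have := congr_arg (fun M => RCLike.re (M j j)) (Unitary.star_mul_self_of_mem hW)
    simp only [mul_apply, star_apply, RCLike.star_def, RCLike.conj_mul, one_apply_eq, map_sum,
      RCLike.one_re] at this
    exact_mod_cast this
  exact mem_doublyStochastic_iff_sum.2 ⟨fun i j => sq_nonneg _, row, col⟩

end Matrix

theorem sum_mul_le_sum_mul_of_forall_perm {R ι : Type*} [Field R] [LinearOrder R]
    [IsStrictOrderedRing R] [Fintype ι] [DecidableEq ι] {f g : ι → ι → R}
    (h : ∀ σ : Equiv.Perm ι, ∑ j, f j (σ j) ≤ ∑ j, g j (σ j))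
    {s : Matrix ι ι R} (hs : s ∈ doublyStochastic R ι) :
    ∑ j, ∑ i, f j i * s j i ≤ ∑ j, ∑ i, g j i * s j i := by
  obtain ⟨w, hw0, -, rfl⟩ := exists_eq_sum_perm_of_mem_doublyStochastic hs
  have pair (f : ι → ι → R) : ∑ j, ∑ i, f j i * (∑ σ, w σ • σ.permMatrix R) j i =
      ∑ σ, w σ * ∑ j, f j (σ j) := by
    simp only [Matrix.sum_apply, Matrix.smul_apply, smul_eq_mul, Finset.mul_sum]
    refine (Finset.sum_congr rfl fun j _ => ?_).trans Finset.sum_comm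
    rw [Finset.sum_comm]
    refine Finset.sum_congr rfl fun σ _ => ?_
    simp [Equiv.Perm.permMatrix, PEquiv.toMatrix_apply, Equiv.toPEquiv_apply, mul_comm]
  rw [pair, pair]
  exact Finset.sum_le_sum fun σ _ => mul_le_mul_of_nonneg_left (h σ) (hw0 σ)

open scoped MatrixOrder in
theorem absMat_eq_cfcSqrt {m n : ℕ} (A : Matrix (Fin m) (Fin n) ℂ) :
    absMat A = CFC.sqrt (Aᴴ * A) := by
  rw [CFC.sqrt_eq_real_sqrt _ (posSemidef_conjTranspose_mul_self A).nonneg, cfcₙ_eq_cfc,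
    (isHermitian_conjTranspose_mul_self A).cfc_eq]
  rfl

open scoped MatrixOrder in
theorem absMat_unitary_conj_diagonal {n : ℕ} {U : Matrix (Fin n) (Fin n) ℂ}
    (hU : U ∈ unitaryGroup (Fin n) ℂ) (d : Fin n → ℂ) :
    absMat (U * diagonal d * Uᴴ) = U * diagonal (fun i => (‖d i‖ : ℂ)) * Uᴴ := by
  have hUU : Uᴴ * U = 1 := Unitary.star_mul_self_of_mem hU
  have conj_mul (a b : Fin n → ℂ) :
      U * diagonal a * Uᴴ * (U * diagonal b * Uᴴ) = U * diagonal (a * b) * Uᴴ := by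
    simp only [Matrix.mul_assoc, ← Matrix.mul_assoc Uᴴ U, hUU, Matrix.one_mul,
      ← Matrix.mul_assoc (diagonal a), diagonal_mul_diagonal, Pi.mul_def]
  have hstar : (U * diagonal d * Uᴴ)ᴴ = U * diagonal (star d) * Uᴴ := by
    simp only [conjTranspose_mul, conjTranspose_conjTranspose, diagonal_conjTranspose,
      Matrix.mul_assoc]
  have hpsd : (U * diagonal (fun i => (‖d i‖ : ℂ)) * Uᴴ).PosSemidef :=
    (posSemidef_diagonal_iff.2 fun i => by positivity).mul_mul_conjTranspose_same U
  rw [absMat_eq_cfcSqrt]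
  refine CFC.sqrt_unique ?_ hpsd.nonneg
  rw [conj_mul, hstar, conj_mul]
  congr 3
  funext i
  simp [RCLike.conj_mul, sq]

theorem frob_absMat_sub_le_of_forall_perm {n : ℕ} {U V : Matrix (Fin n) (Fin n) ℂ}
    (hU : U ∈ unitaryGroup (Fin n) ℂ) (hV : V ∈ unitaryGroup (Fin n) ℂ) (d e : Fin n → ℂ) {γ : ℝ}
    (h : ∀ σ : Equiv.Perm (Fin n),
      ∑ j, (‖d j‖ - ‖e (σ j)‖) ^ 2 ≤ γ * ∑ j, ‖d j - e (σ j)‖ ^ 2) :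
    frob (absMat (U * diagonal d * Uᴴ) - absMat (V * diagonal e * Vᴴ)) ≤
      √γ * frob (U * diagonal d * Uᴴ - V * diagonal e * Vᴴ) := by
  have hW : Uᴴ * V ∈ unitaryGroup (Fin n) ℂ := mul_mem (Unitary.star_mem hU) hV
  have key := sum_mul_le_sum_mul_of_forall_perm
    (f := fun j i => (‖d j‖ - ‖e i‖) ^ 2) (g := fun j i => γ * ‖d j - e i‖ ^ 2)
    (by simpa only [Finset.mul_sum] using h) (of_norm_sq_mem_doublyStochastic hW)
  simp only [of_apply, mul_assoc, ← Finset.mul_sum] at key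
  rw [absMat_unitary_conj_diagonal hU, absMat_unitary_conj_diagonal hV, frob, frob,
    sum_norm_sq_unitary_conj_diagonal_sub hU hV, sum_norm_sq_unitary_conj_diagonal_sub hU hV,
    ← Real.sqrt_mul' _ (by positivity)]
  refine Real.sqrt_le_sqrt ?_
  simpa only [← Complex.ofReal_sub, Complex.norm_real, Real.norm_eq_abs, sq_abs] using key

def eigenDiag (n r : ℕ) (l : ℕ → ℂ) (i : Fin n) : ℂ :=
  if (i : ℕ) < r then l ((i : ℕ) + 1) else 0

theorem HasEigen.exists_unitary {n r : ℕ} {A : Matrix (Fin n) (Fin n) ℂ} {l : ℕ → ℂ}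
    (h : HasEigen A r l) : ∃ U ∈ unitaryGroup (Fin n) ℂ, A = U * diagonal (eigenDiag n r l) * Uᴴ :=
  let ⟨U, _, hU, hA⟩ := h
  ⟨U, mem_unitaryGroup_iff.2 hU, hA⟩

theorem eigenDiag_self {n : ℕ} (l : ℕ → ℂ) (i : Fin n) : eigenDiag n n l i = l ((i : ℕ) + 1) :=
  if_pos i.isLt

theorem sum_comp_eigenDiag {M : Type*} [AddCommMonoid M] {n r : ℕ} (hrn : r ≤ n) (l : ℕ → ℂ)
    (F : Fin n → ℂ → M) (hF : ∀ j, F j 0 = 0) :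
    ∑ j, F j (eigenDiag n r l j) = ∑ j : Fin r, F (Fin.castLE hrn j) (l ((j : ℕ) + 1)) := by
  refine (Fintype.sum_of_injective _ (Fin.castLE_injective hrn) _ _ (fun j hj => ?_)
    fun j => by simp [eigenDiag]).symm
  have hrj : r ≤ (j : ℕ) := by
    by_contra! hjr
    exact hj ⟨⟨j, hjr⟩, rfl⟩
  simp [eigenDiag, hF, hrj.not_gt]

theorem sum_norm_sq_eigenDiag {n r : ℕ} (hrn : r ≤ n) (l : ℕ → ℂ) :
    ∑ j, ‖eigenDiag n r l j‖ ^ 2 = ∑ j ∈ Icc 1 r, ‖l j‖ ^ 2 := by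
  rw [sum_comp_eigenDiag hrn l (fun _ x => ‖x‖ ^ 2) (by simp),
    Fin.sum_univ_eq_sum_range (fun j => ‖l (j + 1)‖ ^ 2), ← Finset.Ico_add_one_right_eq_Icc,
    Finset.sum_Ico_eq_sum_range]
  simp [add_comm]

theorem sum_eigenDiag_perm {n r : ℕ} (hrn : r ≤ n) (l lh : ℕ → ℂ) (σ : Equiv.Perm (Fin n))
    (p : ℂ → ℂ → ℝ) (hp : ∀ y, p 0 y = 0) :
    ∑ j, (‖eigenDiag n r l j‖ ^ 2 + ‖eigenDiag n n lh (σ j)‖ ^ 2 -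
        2 * p (eigenDiag n r l j) (eigenDiag n n lh (σ j))) =
      ∑ j ∈ Icc 1 r, ‖l j‖ ^ 2 + ∑ j ∈ Icc 1 n, ‖lh j‖ ^ 2 -
        2 * ∑ j : Fin r, p (l ((j : ℕ) + 1)) (lh ((σ (Fin.castLE hrn j) : ℕ) + 1)) := by
  rw [Finset.sum_sub_distrib, Finset.sum_add_distrib, ← Finset.mul_sum,
    Equiv.sum_comp σ (fun i => ‖eigenDiag n n lh i‖ ^ 2), sum_norm_sq_eigenDiag hrn,
    sum_norm_sq_eigenDiag le_rfl,
    sum_comp_eigenDiag hrn l (fun j x => p x (eigenDiag n n lh (σ j))) fun j => hp _]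
  simp only [eigenDiag_self]

noncomputable def kittanehQuotient (n r : ℕ) (l lh : ℕ → ℂ) (Fh : ℝ) (g : Fin r → Fin n) : ℝ :=
  (Fh - 2 * ∑ j, ‖lh ((g j : ℕ) + 1)‖ * ‖l ((j : ℕ) + 1)‖) /
    (Fh - 2 * ∑ j, (lh ((g j : ℕ) + 1) * (starRingEnd ℂ) (l ((j : ℕ) + 1))).re)

noncomputable def kittanehConstant (n r : ℕ) (l lh : ℕ → ℂ) (Fh : ℝ) : ℝ :=
  sSup {x : ℝ | ∃ g : Fin r → Fin n, Function.Injective g ∧ x = kittanehQuotient n r l lh Fh g}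

theorem kittanehQuotient_le_kittanehConstant {n r : ℕ} (l lh : ℕ → ℂ) (Fh : ℝ)
    {g : Fin r → Fin n} (hg : Function.Injective g) :
    kittanehQuotient n r l lh Fh g ≤ kittanehConstant n r l lh Fh := by
  refine le_csSup ((Set.finite_range (kittanehQuotient n r l lh Fh)).subset ?_).bddAbove
    ⟨g, hg, rfl⟩
  rintro _ ⟨g, -, rfl⟩
  exact ⟨g, rfl⟩

theorem le_mul_of_div_le_of_le {α : Type*} [Field α] [LinearOrder α] [IsStrictOrderedRing α]
    {x y γ : α} (hxy : x ≤ y) (hy : 0 ≤ y) (h : x / y ≤ γ) : x ≤ γ * y := by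
  rcases hy.eq_or_lt with rfl | hy
  · simpa using hxy
  · exact (div_le_iff₀ hy).1 h

theorem sum_sq_norm_sub_norm_le_kittanehConstant_mul {n r : ℕ} (hrn : r ≤ n) (l lh : ℕ → ℂ)
    {Fh : ℝ} (hFh : Fh = ∑ j ∈ Icc 1 r, ‖l j‖ ^ 2 + ∑ j ∈ Icc 1 n, ‖lh j‖ ^ 2)
    (σ : Equiv.Perm (Fin n)) :
    ∑ j, (‖eigenDiag n r l j‖ - ‖eigenDiag n n lh (σ j)‖) ^ 2 ≤
      kittanehConstant n r l lh Fh * ∑ j, ‖eigenDiag n r l j - eigenDiag n n lh (σ j)‖ ^ 2 := by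
  have hnum : ∑ j, (‖eigenDiag n r l j‖ - ‖eigenDiag n n lh (σ j)‖) ^ 2 =
      Fh - 2 * ∑ j : Fin r, ‖lh ((σ (Fin.castLE hrn j) : ℕ) + 1)‖ * ‖l ((j : ℕ) + 1)‖ := by
    rw [hFh, ← sum_eigenDiag_perm hrn l lh σ (fun x y => ‖y‖ * ‖x‖) (by simp)]
    congr! 1 with j
    ring
  have hden : ∑ j, ‖eigenDiag n r l j - eigenDiag n n lh (σ j)‖ ^ 2 =
      Fh - 2 * ∑ j : Fin r, (lh ((σ (Fin.castLE hrn j) : ℕ) + 1) *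
        (starRingEnd ℂ) (l ((j : ℕ) + 1))).re := by
    rw [hFh, ← sum_eigenDiag_perm hrn l lh σ (fun x y => (y * (starRingEnd ℂ) x).re) (by simp)]
    congr! 1 with j
    rw [norm_sub_rev, ← Complex.normSq_eq_norm_sq, Complex.normSq_sub, Complex.normSq_eq_norm_sq,
      Complex.normSq_eq_norm_sq]
    ring
  -- `numerator ≤ denominator` covers a zero denominator, where the quotient is the junk `0`
  refine le_mul_of_div_le_of_le (Finset.sum_le_sum fun j _ => ?_) (by positivity) ?_
  · rw [← sq_abs]
    exact pow_le_pow_left₀ (abs_nonneg _) (abs_norm_sub_norm_le _ _) 2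
  · rw [hnum, hden]
    exact kittanehQuotient_le_kittanehConstant l lh Fh (σ.injective.comp (Fin.castLE_injective hrn))

theorem sharp_upper_bound_kittaneh_full_rank_general
    (n r : ℕ) (hrn : r ≤ n)
    (A B : Matrix (Fin n) (Fin n) ℂ)
    (l lh : ℕ → ℂ)
    (hAe : HasEigen A r l) (hBe : HasEigen B n lh)
    (Fh : ℝ)
    (hFh : Fh = ∑ j ∈ Finset.Icc 1 r, ‖l j‖ ^ 2 + ∑ j ∈ Finset.Icc 1 n, ‖lh j‖ ^ 2) :
    frob (absMat A - absMat B) ≤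
      Real.sqrt (sSup {x : ℝ | ∃ g : Fin r → Fin n, Function.Injective g ∧
        x = (Fh - 2 * ∑ j, ‖lh ((g j : ℕ) + 1)‖ * ‖l ((j : ℕ) + 1)‖) /
            (Fh - 2 * ∑ j, (lh ((g j : ℕ) + 1) *
               (starRingEnd ℂ) (l ((j : ℕ) + 1))).re)}) *
      frob (A - B) := by
  obtain ⟨U, hU, rfl⟩ := hAe.exists_unitary
  obtain ⟨V, hV, rfl⟩ := hBe.exists_unitary
  exact frob_absMat_sub_le_of_forall_perm hU hV _ _
    (sum_sq_norm_sub_norm_le_kittanehConstant_mul hrn l lh hFh)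

theorem sharp_upper_bound_kittaneh_full_rank
    (n r : ℕ) (hrn : r ≤ n)
    (A B : Matrix (Fin n) (Fin n) ℂ)
    (hA : A * Aᴴ = Aᴴ * A) (hB : B * Bᴴ = Bᴴ * B)
    (l lh : ℕ → ℂ)
    (hAe : HasEigen A r l) (hBe : HasEigen B n lh)
    (hl : ∀ j, 1 ≤ j → j ≤ r → l j ≠ 0) (hlh : ∀ j, 1 ≤ j → j ≤ n → lh j ≠ 0)
    (hrankA : A.rank = r) (hBinv : IsUnit B.det)
    (Fh : ℝ)
    (hFh : Fh = ∑ j ∈ Finset.Icc 1 r, ‖l j‖ ^ 2 + ∑ j ∈ Finset.Icc 1 n, ‖lh j‖ ^ 2) :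
    frob (absMat A - absMat B) ≤
      Real.sqrt (sSup {x : ℝ | ∃ g : Fin r → Fin n, Function.Injective g ∧
        x = (Fh - 2 * ∑ j, ‖lh ((g j : ℕ) + 1)‖ * ‖l ((j : ℕ) + 1)‖) /
            (Fh - 2 * ∑ j, (lh ((g j : ℕ) + 1) *
               (starRingEnd ℂ) (l ((j : ℕ) + 1))).re)}) *
      frob (A - B) :=
  sharp_upper_bound_kittaneh_full_rank_general n r hrn A B l lh hAe hBe Fh hFh
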